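/- If {Π_ξ} is a finite family of positive semidefinite operators on ℂ^d satisfying Σ_ξ (Π_ξ⊗Π_ξ)/tr(Π_ξ) = (Σ_ξ w_ξ/d)·[((1+℘)/(d+1)) P₊ + ((1−℘)/(d−1)) P₋] where w_ξ = tr(Π_ξ) and ℘ is the weighted average purity, then Σ_ξ Π_ξ = (Σ_ξ w_ξ/d)·1; in particular, a generalized 2-design forms a POVM after rescaling. -/

import Mathlib

open Matrix Kronecker ComplexOrder BigOperators

/-- The swap operator `V` on `ℂ^d ⊗ ℂ^d`, `V(x ⊗ y) = y ⊗ x`. -/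
noncomputable def swapOp (d : ℕ) : Matrix (Fin d × Fin d) (Fin d × Fin d) ℂ :=
  fun p q => if p.1 = q.2 ∧ p.2 = q.1 then 1 else 0

/-- Projector onto the symmetric subspace of `ℂ^d ⊗ ℂ^d`. -/
noncomputable def Pplus (d : ℕ) : Matrix (Fin d × Fin d) (Fin d × Fin d) ℂ :=
  (2 : ℂ)⁻¹ • (1 + swapOp d)

/-- Projector onto the antisymmetric subspace of `ℂ^d ⊗ ℂ^d`. -/
noncomputable def Pminus (d : ℕ) : Matrix (Fin d × Fin d) (Fin d × Fin d) ℂ :=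
  (2 : ℂ)⁻¹ • (1 - swapOp d)

/-- Partial trace over the first tensor factor. -/
noncomputable def ptr1 {d : ℕ} (Q : Matrix (Fin d × Fin d) (Fin d × Fin d) ℂ) :
    Matrix (Fin d) (Fin d) ℂ :=
  fun j k => ∑ i, Q (i, j) (i, k)

/-- Partial trace over the second tensor factor. -/
noncomputable def ptr2 {d : ℕ} (Q : Matrix (Fin d × Fin d) (Fin d × Fin d) ℂ) :
    Matrix (Fin d) (Fin d) ℂ :=
  fun i j => ∑ k, Q (i, k) (j, k)

/-
Taking the partial trace over the first factor turns each term `Π ⊗ Π / tr Π` of the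
design into `Π`, while `tr₁ P₊ = (d+1)/2 · 1` and `tr₁ P₋ = (d-1)/2 · 1`, since `tr₁ 1 = d · 1`
and `tr₁ V = 1`. The weights `(1 ± ℘)/(d ± 1)` then cancel these factors and add up to `1`.
-/

@[simps]
noncomputable def ptr1Linear (d : ℕ) :
    Matrix (Fin d × Fin d) (Fin d × Fin d) ℂ →ₗ[ℂ] Matrix (Fin d) (Fin d) ℂ where
  toFun := ptr1
  map_add' Q R := by ext j k; simp [ptr1, Finset.sum_add_distrib]
  map_smul' c Q := by ext j k; simp [ptr1, Finset.mul_sum]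

lemma ptr1_one (d : ℕ) :
    ptr1 (1 : Matrix (Fin d × Fin d) (Fin d × Fin d) ℂ) = (d : ℂ) • 1 := by
  ext j k
  by_cases h : j = k <;> simp [ptr1, Matrix.one_apply, h]

lemma ptr1_swapOp (d : ℕ) : ptr1 (swapOp d) = 1 := by
  ext j k
  simp only [ptr1, swapOp, Matrix.one_apply]
  rw [Finset.sum_eq_single k] <;> grind

lemma ptr1_kronecker {d : ℕ} (A B : Matrix (Fin d) (Fin d) ℂ) :
    ptr1 (A ⊗ₖ B) = A.trace • B := by
  ext j k
  simp [ptr1, Matrix.kroneckerMap_apply, Matrix.trace, Finset.sum_mul]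

lemma ptr1_Pplus (d : ℕ) : ptr1 (Pplus d) = (((d : ℂ) + 1) / 2) • 1 := by
  simp only [Pplus, ← ptr1Linear_apply, map_smul, map_add]
  simp only [ptr1Linear_apply, ptr1_one, ptr1_swapOp]
  module

lemma ptr1_Pminus (d : ℕ) : ptr1 (Pminus d) = (((d : ℂ) - 1) / 2) • 1 := by
  simp only [Pminus, ← ptr1Linear_apply, map_smul, map_sub]
  simp only [ptr1Linear_apply, ptr1_one, ptr1_swapOp]
  module

lemma Matrix.PosSemidef.ptr1_inv_trace_smul_kronecker_self {d : ℕ}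
    {A : Matrix (Fin d) (Fin d) ℂ} (hA : A.PosSemidef) :
    ptr1 ((A.trace)⁻¹ • (A ⊗ₖ A)) = A := by
  rw [← ptr1Linear_apply, map_smul, ptr1Linear_apply, ptr1_kronecker, smul_smul]
  by_cases h : A.trace = 0
  -- a positive semidefinite matrix of trace zero vanishes, so the junk value `0⁻¹ = 0` is harmless
  · simp [hA.trace_eq_zero_iff.mp h]
  · rw [inv_mul_cancel₀ h, one_smul]

theorem stmt13_general {d n : ℕ} (hd : 2 ≤ d) (E : Fin n → Matrix (Fin d) (Fin d) ℂ)
    (hE : ∀ ξ, (E ξ).PosSemidef)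
    (p : ℂ)
    (hdesign : ∑ ξ, ((E ξ).trace)⁻¹ • (E ξ ⊗ₖ E ξ)
        = ((∑ ξ, (E ξ).trace) / (d : ℂ)) •
            (((1 + p) / ((d : ℂ) + 1)) • Pplus d + ((1 - p) / ((d : ℂ) - 1)) • Pminus d)) :
    ∑ ξ, E ξ = ((∑ ξ, (E ξ).trace) / (d : ℂ)) • (1 : Matrix (Fin d) (Fin d) ℂ) := by
  have hdp : (d : ℂ) + 1 ≠ 0 := Nat.cast_add_one_ne_zero d
  have hdm : (d : ℂ) - 1 ≠ 0 := sub_ne_zero.mpr (by exact_mod_cast (by omega : d ≠ 1))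
  have weights : (1 + p) / ((d : ℂ) + 1) * (((d : ℂ) + 1) / 2)
      + (1 - p) / ((d : ℂ) - 1) * (((d : ℂ) - 1) / 2) = 1 := by
    field_simp
    ring
  calc ∑ ξ, E ξ = ptr1Linear d (∑ ξ, ((E ξ).trace)⁻¹ • (E ξ ⊗ₖ E ξ)) := by
        simp only [map_sum, ptr1Linear_apply, (hE _).ptr1_inv_trace_smul_kronecker_self]
    _ = _ := by
        rw [hdesign]
        simp only [map_smul, map_add, ptr1Linear_apply, ptr1_Pplus, ptr1_Pminus, smul_smul,
          ← add_smul, weights, mul_one]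

/-- If a finite family of nonzero positive semidefinite operators on `ℂ^d`
is a generalized 2-design, then `Σ_ξ E_ξ = (Σ_ξ w_ξ/d)·1`; in particular it forms a POVM
after rescaling. -/
theorem stmt13 {d n : ℕ} (hd : 2 ≤ d) (E : Fin n → Matrix (Fin d) (Fin d) ℂ)
    (hE : ∀ ξ, (E ξ).PosSemidef) (hE0 : ∀ ξ, E ξ ≠ 0)
    (p : ℂ)
    (hp : p = (∑ ξ, (E ξ * E ξ).trace / (E ξ).trace) / (∑ ξ, (E ξ).trace))
    (hdesign : ∑ ξ, ((E ξ).trace)⁻¹ • (E ξ ⊗ₖ E ξ)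
        = ((∑ ξ, (E ξ).trace) / (d : ℂ)) •
            (((1 + p) / ((d : ℂ) + 1)) • Pplus d + ((1 - p) / ((d : ℂ) - 1)) • Pminus d)) :
    ∑ ξ, E ξ = ((∑ ξ, (E ξ).trace) / (d : ℂ)) • (1 : Matrix (Fin d) (Fin d) ℂ) :=
  stmt13_general hd E hE p hdesign
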